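/- arXiv:2110.11696 — 2 statements merged into one kernel-verified Lean document; each statement's English description precedes it below -/
import Mathlib

section
/- Let (Y,ρ) be a complete metric space without isolated points. If there exist a tree with a reference point (T,π,φ) and a partition K of (Y,ρ) parametrized by (T,π,φ) such that ρ satisfies the basic framework with respect to K, then (Y,ρ) is doubling and uniformly perfect. -/
open Metric Set

/-- `(T, f, φ)` is a *tree with a reference point*:
(H1) the set `F_f = {w : f^[n] w = w for some n ≥ 1}` has at most one element,
(H2) any two points have a common iterated image,
and `φ ∈ F_f` whenever `F_f ≠ ∅`. -/
def IsTreeRP {T : Type*} (f : T → T) (φ : T) : Prop :=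
  {w : T | ∃ n : ℕ, 1 ≤ n ∧ f^[n] w = w}.Subsingleton ∧
  (∀ w v : T, ∃ n m : ℕ, f^[n] w = f^[m] v) ∧
  ((∃ w : T, ∃ n : ℕ, 1 ≤ n ∧ f^[n] w = w) → ∃ n : ℕ, 1 ≤ n ∧ f^[n] φ = φ)

/-- `b w v = min {n ≥ 0 : f^[n] w = f^[m] v for some m ≥ 0}`. -/
def IsTreeB {T : Type*} (f : T → T) (b : T → T → ℕ) : Prop :=
  ∀ w v : T, IsLeast {n : ℕ | ∃ m : ℕ, f^[n] w = f^[m] v} (b w v)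

/-- The level `[w] = b(w,φ) - b(φ,w)` of a vertex. -/
def treeLevel {T : Type*} (b : T → T → ℕ) (φ : T) (w : T) : ℤ :=
  (b w φ : ℤ) - (b φ w : ℤ)

/-- `K : T → Set Y` is a *partition* of `Y` parametrized by the tree `(T, f, φ)`:
each `K w` is a nonempty compact set which is not a single point,
(P1) the level-0 sets cover `Y` and `K w = ⋃_{v ∈ f⁻¹(w)} K v`, and
(P2) the intersection along any descending chain is a single point. -/
def IsPartition {T : Type*} {Y : Type*} [MetricSpace Y]
    (f : T → T) (φ : T) (b : T → T → ℕ) (K : T → Set Y) : Prop :=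
  (∀ w : T, IsCompact (K w)) ∧
  (∀ w : T, (K w).Nontrivial) ∧
  ((⋃ w ∈ {w : T | treeLevel b φ w = 0}, K w) = univ) ∧
  (∀ w : T, (⋃ v ∈ {v : T | f v = w}, K v) = K w) ∧
  (∀ ws : ℤ → T, (∀ k : ℤ, f (ws (k + 1)) = ws k) →
    ∃ y : Y, (⋂ k : ℤ, K (ws k)) = {y})

/-- `Λ^ρ_s`: the scale-`s` resolution of the tree (empty when `F_f ≠ ∅` and
`s > diam K_φ`). -/
def LambdaSet {T : Type*} {Y : Type*} [MetricSpace Y]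
    (f : T → T) (φ : T) (K : T → Set Y) (s : ℝ) : Set T :=
  {w : T | diam (K w) ≤ s ∧ s < diam (K (f w)) ∧
    ¬((∃ u : T, ∃ n : ℕ, 1 ≤ n ∧ f^[n] u = u) ∧ diam (K φ) < s)}

/-- `ChainLe f φ K s M w v` means the graph distance between `w` and `v` in the graph
`(Λ^ρ_s, E^ρ_s)` is at most `M`. -/
def ChainLe {T : Type*} {Y : Type*} [MetricSpace Y]
    (f : T → T) (φ : T) (K : T → Set Y) (s : ℝ) (M : ℕ) (w v : T) : Prop :=
  ∃ (j : ℕ) (p : ℕ → T), j ≤ M ∧ p 0 = w ∧ p j = v ∧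
    (∀ i ≤ j, p i ∈ LambdaSet f φ K s) ∧
    ∀ i < j, p i ≠ p (i + 1) ∧ (K (p i) ∩ K (p (i + 1))).Nonempty

/-- `δ^ρ_M(x,y) = inf {s > 0 : ∃ w, v ∈ Λ^ρ_s, x ∈ K_w, y ∈ K_v, l^ρ_s(w,v) ≤ M}`. -/
noncomputable def deltaM {T : Type*} {Y : Type*} [MetricSpace Y]
    (f : T → T) (φ : T) (K : T → Set Y) (M : ℕ) (x y : Y) : ℝ :=
  sInf {s : ℝ | 0 < s ∧ ∃ w ∈ LambdaSet f φ K s, ∃ v ∈ LambdaSet f φ K s,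
    x ∈ K w ∧ y ∈ K v ∧ ChainLe f φ K s M w v}

/-- `ρ` satisfies the *basic framework* with respect to the partition `K`:
the standing finiteness assumptions together with
(B1) adaptedness, (B2) thickness, (B3) uniform finiteness and (B4) exponential decay
of diameters. -/
def BasicFramework {T : Type*} {Y : Type*} [MetricSpace Y]
    (f : T → T) (φ : T) (b : T → T → ℕ) (K : T → Set Y) : Prop :=
  -- sup_w #f⁻¹(w) < ∞
  (∃ B : ℕ, ∀ w : T, {v : T | f v = w}.Finite ∧ {v : T | f v = w}.ncard ≤ B) ∧
  -- K_w \ ⋃_{v ∈ (T)_{[w]}, v ≠ w} K_v ≠ ∅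
  (∀ w : T,
    (K w \ ⋃ v ∈ {v : T | treeLevel b φ v = treeLevel b φ w ∧ v ≠ w}, K v).Nonempty) ∧
  -- existence of an open U_w ⊇ K_w meeting only finitely many same-level pieces
  (∀ w : T, ∃ U : Set Y, IsOpen U ∧ K w ⊆ U ∧
    {v : T | treeLevel b φ v = treeLevel b φ w ∧ (U ∩ K v).Nonempty}.Finite) ∧
  -- (B1) adapted
  (∃ M : ℕ, 1 ≤ M ∧ ∃ η₁ : ℝ, 0 < η₁ ∧ ∀ x y : Y,
    η₁⁻¹ * deltaM f φ K M x y ≤ dist x y ∧ dist x y ≤ η₁ * deltaM f φ K M x y) ∧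
  -- (B2) thick
  (∃ η₂ : ℝ, 0 < η₂ ∧ ∀ w : T, ∃ xw ∈ K w,
    {y : Y | deltaM f φ K 1 xw y ≤ η₂ * diam (K (f w))} ⊆ K w) ∧
  -- (B3) uniformly finite
  (∃ B : ℕ, ∀ s : ℝ, 0 < s → ∀ w ∈ LambdaSet f φ K s,
    {v : T | v ∈ LambdaSet f φ K s ∧ ChainLe f φ K s 1 w v}.Finite ∧
    {v : T | v ∈ LambdaSet f φ K s ∧ ChainLe f φ K s 1 w v}.ncard ≤ B) ∧
  -- (B4)
  (∃ η₃ : ℝ, 0 < η₃ ∧ ∃ R : ℝ, 0 < R ∧ R < 1 ∧ ∀ w : T,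
    η₃⁻¹ * R ^ treeLevel b φ w ≤ diam (K w) ∧ diam (K w) ≤ η₃ * R ^ treeLevel b φ w)

/-- A metric space is *doubling* if there is `N` such that every ball of radius `2R`
is covered by `N` balls of radius `R`. -/
def Doubling (X : Type*) [PseudoMetricSpace X] : Prop :=
  ∃ N : ℕ, ∀ (x : X) (R : ℝ), ∃ c : Fin N → X,
    ball x (2 * R) ⊆ ⋃ i, ball (c i) R

/-- A metric space is *uniformly perfect* if there is `γ > 1` such that
`B(x,γR) \ B(x,R) ≠ ∅` whenever `B(x,R) ≠ X`. -/
def UniformlyPerfect (X : Type*) [PseudoMetricSpace X] : Prop :=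
  ∃ γ : ℝ, 1 < γ ∧ ∀ (x : X) (R : ℝ), 0 < R → ball x R ≠ univ →
    (ball x (γ * R) \ ball x R).Nonempty

section Aux

variable {T : Type*} {Y : Type*} [MetricSpace Y]
variable {f : T → T} {φ : T} {b : T → T → ℕ} {K : T → Set Y}

/-- No point of the tree is periodic. -/
lemma BF_no_periodic (htree : IsTreeRP f φ) (hpart : IsPartition f φ b K) :
    ∀ (w : T) (n : ℕ), 1 ≤ n → f^[n] w ≠ w := by
  intro w n hn hw
  obtain ⟨m, hm1, hmφ⟩ := htree.2.2 ⟨w, n, hn, hw⟩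
  have hfφ : f φ = φ := by
    have h2 : f φ ∈ {w : T | ∃ n, 1 ≤ n ∧ f^[n] w = w} :=
      ⟨m, hm1, by rw [← Function.iterate_succ_apply, Function.iterate_succ_apply', hmφ]⟩
    exact htree.1 h2 ⟨m, hm1, hmφ⟩
  obtain ⟨y, hy⟩ := hpart.2.2.2.2 (fun _ => φ) (fun _ => hfφ)
  have hKφ : K φ = {y} := by rw [← hy]; ext z; simp
  obtain ⟨a, ha, c, hc, hac⟩ := hpart.2.1 φ
  rw [hKφ] at ha hc
  exact hac (ha.trans hc.symm)

lemma BF_iterate_inj (hnp : ∀ (w : T) (n : ℕ), 1 ≤ n → f^[n] w ≠ w) {w : T} {a c : ℕ}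
    (h : f^[a] w = f^[c] w) : a = c := by
  by_contra hne
  rcases Nat.lt_or_ge a c with hlt | hge
  · have : f^[c - a] (f^[a] w) = f^[a] w := by
      rw [← Function.iterate_add_apply, Nat.sub_add_cancel hlt.le, ← h]
    exact hnp (f^[a] w) (c - a) (by omega) this
  · have hlt : c < a := lt_of_le_of_ne hge (fun h' => hne h'.symm)
    have : f^[a - c] (f^[c] w) = f^[c] w := by
      rw [← Function.iterate_add_apply, Nat.sub_add_cancel hlt.le, h]
    exact hnp (f^[c] w) (a - c) (by omega) this

lemma BF_subset_parent (hpart : IsPartition f φ b K) (w : T) : K w ⊆ K (f w) := by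
  intro x hx
  rw [← hpart.2.2.2.1 (f w)]
  exact Set.mem_biUnion (show w ∈ {v : T | f v = f w} from rfl) hx

lemma BF_subset_iterate (hpart : IsPartition f φ b K) (w : T) (n : ℕ) :
    K w ⊆ K (f^[n] w) := by
  induction n with
  | zero => exact subset_rfl
  | succ n ih =>
    rw [Function.iterate_succ_apply']
    exact ih.trans (BF_subset_parent hpart _)

lemma BF_diam_pos (hpart : IsPartition f φ b K) (w : T) : 0 < diam (K w) := by
  obtain ⟨a, ha, c, hc, hac⟩ := hpart.2.1 w
  calc (0:ℝ) < dist a c := dist_pos.mpr hac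
  _ ≤ diam (K w) := dist_le_diam_of_mem (hpart.1 w).isBounded ha hc

/-- If `w = f^[m] φ` then `b w φ = 0` and `b φ w = m`. -/
lemma BF_b_of_orbit (hb : IsTreeB f b) (hnp : ∀ (w : T) (n : ℕ), 1 ≤ n → f^[n] w ≠ w)
    {w : T} {m : ℕ} (hw : w = f^[m] φ) : b w φ = 0 ∧ b φ w = m := by
  constructor
  · refine Nat.le_zero.mp ((hb w φ).2 ⟨m, ?_⟩)
    simpa using hw
  · refine le_antisymm ((hb φ w).2 ⟨0, by simpa using hw.symm⟩) ?_
    obtain ⟨m', hm'⟩ := (hb φ w).1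
    have hm2 : f^[b φ w] φ = f^[m' + m] φ := by
      rw [hm', hw, ← Function.iterate_add_apply]
    have := BF_iterate_inj hnp hm2
    omega

lemma BF_level_f (hb : IsTreeB f b) (hnp : ∀ (w : T) (n : ℕ), 1 ≤ n → f^[n] w ≠ w) (w : T) :
    treeLevel b φ (f w) = treeLevel b φ w - 1 := by
  by_cases h0 : ∃ m, w = f^[m] φ
  · obtain ⟨m, hm⟩ := h0
    obtain ⟨h1, h2⟩ := BF_b_of_orbit hb hnp hm
    have hfw : f w = f^[m+1] φ := by
      rw [hm]; exact (Function.iterate_succ_apply' f m φ).symm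
    obtain ⟨h3, h4⟩ := BF_b_of_orbit hb hnp hfw
    unfold treeLevel
    rw [h1, h2, h3, h4]
    push_cast; ring
  · set k := b w φ with hk
    have hk1 : 1 ≤ k := by
      rcases Nat.eq_zero_or_pos k with h | h
      · obtain ⟨m, hm⟩ := (hb w φ).1
        rw [← hk, h] at hm
        exact absurd ⟨m, by simpa using hm⟩ h0
      · exact h
    have hbfw : b (f w) φ = k - 1 := by
      refine le_antisymm ((hb (f w) φ).2 ?_) ?_
      · obtain ⟨m, hm⟩ := (hb w φ).1
        refine ⟨m, ?_⟩
        have : f^[k - 1 + 1] w = f^[m] φ := by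
          rw [Nat.sub_add_cancel hk1]; exact hm
        rw [Function.iterate_add_apply] at this
        simpa using this
      · obtain ⟨m, hm⟩ := (hb (f w) φ).1
        rw [← Function.iterate_succ_apply] at hm
        have := (hb w φ).2 ⟨m, hm⟩
        omega
    have hm_ge : ∀ n m : ℕ, f^[n] φ = f^[m] w → k ≤ m := fun n m h =>
      (hb w φ).2 ⟨n, h.symm⟩
    have hbφfw : b φ (f w) = b φ w := by
      refine le_antisymm ?_ ?_
      · obtain ⟨m, hm⟩ := (hb φ w).1
        have hm1 : 1 ≤ m := le_trans hk1 (hm_ge _ _ hm)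
        refine (hb φ (f w)).2 ⟨m - 1, ?_⟩
        rw [hm]
        have : f^[m - 1 + 1] w = f^[m - 1] (f w) := Function.iterate_succ_apply f (m-1) w
        rw [Nat.sub_add_cancel hm1] at this
        exact this
      · obtain ⟨m, hm⟩ := (hb φ (f w)).1
        rw [← Function.iterate_succ_apply] at hm
        exact (hb φ w).2 ⟨m + 1, hm⟩
    unfold treeLevel
    rw [hbfw, hbφfw]
    push_cast [Nat.cast_sub hk1]
    ring

lemma BF_level_iterate (hb : IsTreeB f b) (hnp : ∀ (w : T) (n : ℕ), 1 ≤ n → f^[n] w ≠ w)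
    (w : T) (n : ℕ) : treeLevel b φ (f^[n] w) = treeLevel b φ w - n := by
  induction n with
  | zero => simp
  | succ n ih =>
    rw [Function.iterate_succ_apply', BF_level_f hb hnp, ih]
    push_cast; ring


lemma BF_descend (hb : IsTreeB f b) (hpart : IsPartition f φ b K)
    (hnp : ∀ (w : T) (n : ℕ), 1 ≤ n → f^[n] w ≠ w)
    {η₃ R : ℝ} (hη₃ : 0 < η₃) (hR0 : 0 < R) (hR1 : R < 1)
    (hB4 : ∀ w : T, η₃⁻¹ * R ^ treeLevel b φ w ≤ diam (K w) ∧
      diam (K w) ≤ η₃ * R ^ treeLevel b φ w)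
    (x : Y) (t : ℝ) (ht : 0 < t) : ∃ u : T, x ∈ K u ∧ diam (K u) ≤ t := by
  have hcover : ∀ u : T, x ∈ K u → ∃ v, f v = u ∧ x ∈ K v := by
    intro u hu
    rw [← hpart.2.2.2.1 u] at hu
    simpa using hu
  obtain ⟨u₀, hu₀lev, hxu₀⟩ : ∃ u, treeLevel b φ u = 0 ∧ x ∈ K u := by
    have hx : x ∈ ⋃ w ∈ {w : T | treeLevel b φ w = 0}, K w := by
      rw [hpart.2.2.1]; trivial
    simpa using hx
  choose g hg1 hg2 using hcover
  obtain ⟨c, hc0, hcmem, hcf⟩ : ∃ c : ℕ → T, treeLevel b φ (c 0) = 0 ∧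
      (∀ n, x ∈ K (c n)) ∧ (∀ n, f (c (n+1)) = c n) := by
    let D : ℕ → {u : T // x ∈ K u} := fun n =>
      Nat.rec (motive := fun _ => {u : T // x ∈ K u}) ⟨u₀, hxu₀⟩
        (fun _ p => ⟨g p.1 p.2, hg2 p.1 p.2⟩) n
    exact ⟨fun n => (D n).1, hu₀lev, fun n => (D n).2, fun n => hg1 _ _⟩
  have hlev : ∀ n : ℕ, treeLevel b φ (c n) = n := by
    intro n; induction n with
    | zero => exact hc0
    | succ n ih =>
      have h := BF_level_f (φ := φ) hb hnp (c (n+1))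
      rw [hcf n, ih] at h
      push_cast
      omega
  obtain ⟨n, hn⟩ : ∃ n : ℕ, R ^ n < t / η₃ := exists_pow_lt_of_lt_one (div_pos ht hη₃) hR1
  refine ⟨c n, hcmem n, ?_⟩
  have h1 := (hB4 (c n)).2
  rw [hlev n] at h1
  have h2 : η₃ * R ^ (n : ℤ) < t := by
    rw [zpow_natCast]
    calc η₃ * R ^ n < η₃ * (t / η₃) := by
          exact mul_lt_mul_of_pos_left hn hη₃
      _ = t := by field_simp
  exact h1.trans h2.le


lemma BF_liftup (hb : IsTreeB f b) (hpart : IsPartition f φ b K)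
    (hnp : ∀ (w : T) (n : ℕ), 1 ≤ n → f^[n] w ≠ w)
    {η₃ R : ℝ} (hη₃ : 0 < η₃) (hR0 : 0 < R) (hR1 : R < 1)
    (hB4 : ∀ w : T, η₃⁻¹ * R ^ treeLevel b φ w ≤ diam (K w) ∧
      diam (K w) ≤ η₃ * R ^ treeLevel b φ w)
    (s' : ℝ) (w : T) (hw : diam (K w) ≤ s') :
    ∃ u : T, K w ⊆ K u ∧ u ∈ LambdaSet f φ K s' := by
  classical
  have hex : ∃ n : ℕ, s' < diam (K (f^[n] w)) := by
    obtain ⟨n, hn⟩ : ∃ n : ℕ, s' * η₃ / R ^ treeLevel b φ w < (R⁻¹) ^ n :=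
      pow_unbounded_of_one_lt _ (one_lt_inv_iff₀.mpr ⟨hR0, hR1⟩)
    refine ⟨n, ?_⟩
    have hlow := (hB4 (f^[n] w)).1
    rw [BF_level_iterate hb hnp w n] at hlow
    have hp : (0:ℝ) < R ^ treeLevel b φ w := zpow_pos hR0 _
    rw [div_lt_iff₀ hp] at hn
    have key : s' < η₃⁻¹ * (R ^ treeLevel b φ w * (R ^ n)⁻¹) := by
      rw [inv_pow] at hn
      calc s' = (s' * η₃) * η₃⁻¹ := by field_simp
        _ < ((R ^ n)⁻¹ * R ^ treeLevel b φ w) * η₃⁻¹ :=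
            mul_lt_mul_of_pos_right hn (inv_pos.mpr hη₃)
        _ = η₃⁻¹ * (R ^ treeLevel b φ w * (R ^ n)⁻¹) := by ring
    have hz : R ^ (treeLevel b φ w - (n:ℤ)) = R ^ treeLevel b φ w * (R ^ n)⁻¹ := by
      rw [zpow_sub₀ (ne_of_gt hR0), zpow_natCast, div_eq_mul_inv]
    calc s' < η₃⁻¹ * (R ^ treeLevel b φ w * (R ^ n)⁻¹) := key
      _ = η₃⁻¹ * R ^ (treeLevel b φ w - (n:ℤ)) := by rw [hz]
      _ ≤ diam (K (f^[n] w)) := hlow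
  set n₀ := Nat.find hex with hn₀def
  have hspec : s' < diam (K (f^[n₀] w)) := Nat.find_spec hex
  have hn₀1 : 1 ≤ n₀ := by
    rcases Nat.eq_zero_or_pos n₀ with h | h
    · rw [h] at hspec
      simp only [Function.iterate_zero_apply] at hspec
      exact absurd hspec (not_lt.mpr hw)
    · exact h
  refine ⟨f^[n₀ - 1] w, BF_subset_iterate hpart w _, ?_, ?_, ?_⟩
  · exact not_lt.mp (Nat.find_min hex (show n₀ - 1 < n₀ by omega))
  · have h2 : n₀ - 1 + 1 = n₀ := by omega
    have hh : f (f^[n₀ - 1] w) = f^[n₀] w := by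
      calc f (f^[n₀ - 1] w) = f^[n₀ - 1 + 1] w :=
            (Function.iterate_succ_apply' f (n₀ - 1) w).symm
        _ = f^[n₀] w := by rw [h2]
    rw [hh]; exact hspec
  · rintro ⟨⟨u, n, hn1, hu⟩, -⟩
    exact hnp u n hn1 hu

lemma BF_chain_refl {s : ℝ} {M : ℕ} {w : T} (hw : w ∈ LambdaSet f φ K s) :
    ChainLe f φ K s M w w :=
  ⟨0, fun _ => w, Nat.zero_le _, rfl, rfl, fun _ _ => hw,
    fun i hi => absurd hi (Nat.not_lt_zero i)⟩

lemma BF_chain_mono {s : ℝ} {M M' : ℕ} {w v : T} (h : ChainLe f φ K s M w v)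
    (hMM : M ≤ M') : ChainLe f φ K s M' w v := by
  obtain ⟨j, p, hj, h0, he, hm, hE⟩ := h
  exact ⟨j, p, hj.trans hMM, h0, he, hm, hE⟩

lemma BF_chain_edge {s : ℝ} {M : ℕ} {w v : T} (hw : w ∈ LambdaSet f φ K s)
    (hv : v ∈ LambdaSet f φ K s) (hint : (K w ∩ K v).Nonempty) (hM : 1 ≤ M) :
    ChainLe f φ K s M w v := by
  classical
  by_cases hwv : w = v
  · subst hwv; exact BF_chain_refl hw
  · refine ⟨1, fun i => if i = 0 then w else v, hM, by simp, by simp, ?_, ?_⟩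
    · intro i _
      by_cases h : i = 0 <;> simp [h, hw, hv]
    · intro i hi
      have h0 : i = 0 := by omega
      subst h0
      simpa using ⟨hwv, hint⟩

lemma BF_chain_concat {s : ℝ} {a a' : ℕ} {w u v : T} (h1 : ChainLe f φ K s a w u)
    (h2 : ChainLe f φ K s a' u v) : ChainLe f φ K s (a + a') w v := by
  classical
  obtain ⟨j₁, p₁, hj₁, h10, h1e, h1m, h1E⟩ := h1
  obtain ⟨j₂, p₂, hj₂, h20, h2e, h2m, h2E⟩ := h2
  refine ⟨j₁ + j₂, fun i => if i < j₁ then p₁ i else p₂ (i - j₁), by omega, ?_, ?_, ?_, ?_⟩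
  · by_cases h : 0 < j₁
    · simp only [if_pos h]; exact h10
    · have hj0 : j₁ = 0 := by omega
      simp only [if_neg h]
      rw [Nat.zero_sub, h20, ← h1e, hj0, h10]
  · have h : ¬ (j₁ + j₂ < j₁) := by omega
    simp only [if_neg h]
    have h' : j₁ + j₂ - j₁ = j₂ := by omega
    rw [h', h2e]
  · intro i hi
    by_cases h : i < j₁
    · simp only [if_pos h]; exact h1m i (by omega)
    · simp only [if_neg h]; exact h2m _ (by omega)
  · intro i hi
    by_cases h : i + 1 < j₁
    · have h' : i < j₁ := by omega
      simp only [if_pos h, if_pos h']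
      exact h1E i (by omega)
    · by_cases h'' : i < j₁
      · have hi1 : i + 1 = j₁ := by omega
        simp only [if_pos h'', if_neg h]
        have hq : p₂ (i + 1 - j₁) = p₁ (i + 1) := by
          rw [hi1, Nat.sub_self, h20, ← h1e]
        rw [hq]
        exact h1E i h''
      · simp only [if_neg h, if_neg h'']
        have hq : i + 1 - j₁ = (i - j₁) + 1 := by omega
        rw [hq]
        exact h2E (i - j₁) (by omega)

lemma BF_chain'_to {s : ℝ} : ∀ (j : ℕ) (p : ℕ → T),
    (∀ i ≤ j, p i ∈ LambdaSet f φ K s) →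
    (∀ i < j, (K (p i) ∩ K (p (i+1))).Nonempty) →
    ChainLe f φ K s j (p 0) (p j) := by
  intro j
  induction j with
  | zero =>
    intro p hm hE
    exact ⟨0, p, le_refl 0, rfl, rfl, hm, fun i hi => absurd hi (Nat.not_lt_zero i)⟩
  | succ j ih =>
    intro p hm hE
    classical
    obtain ⟨j', p', hj', h0, he, hm', hE'⟩ :=
      ih (fun i => p (i+1)) (fun i hi => hm (i+1) (by omega)) (fun i hi => hE (i+1) (by omega))
    by_cases hpp : p 0 = p 1
    · exact ⟨j', p', by omega, by rw [h0, ← hpp], he, hm', hE'⟩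
    · refine ⟨j' + 1, fun i => if i = 0 then p 0 else p' (i - 1), by omega, by simp, ?_, ?_, ?_⟩
      · simp only [if_neg (show ¬ j' + 1 = 0 by omega), Nat.add_sub_cancel]
        exact he
      · intro i hi
        by_cases h : i = 0
        · subst h; simpa using hm 0 (by omega)
        · simp only [if_neg h]
          exact hm' (i-1) (by omega)
      · intro i hi
        by_cases h : i = 0
        · subst h
          simp only [if_pos rfl, if_neg (show ¬ (0+1) = 0 by omega)]
          rw [show (0+1-1 : ℕ) = 0 from rfl, h0]
          exact ⟨hpp, hE 0 (by omega)⟩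
        · simp only [if_neg h, if_neg (show ¬ i + 1 = 0 by omega)]
          have hq : i + 1 - 1 = (i - 1) + 1 := by omega
          rw [hq]
          exact hE' (i - 1) (by omega)

lemma BF_chain_lift (hb : IsTreeB f b) (hpart : IsPartition f φ b K)
    (hnp : ∀ (w : T) (n : ℕ), 1 ≤ n → f^[n] w ≠ w)
    {η₃ R : ℝ} (hη₃ : 0 < η₃) (hR0 : 0 < R) (hR1 : R < 1)
    (hB4 : ∀ w : T, η₃⁻¹ * R ^ treeLevel b φ w ≤ diam (K w) ∧
      diam (K w) ≤ η₃ * R ^ treeLevel b φ w)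
    {s s' : ℝ} (hss : s ≤ s') {M : ℕ} {w v : T} (h : ChainLe f φ K s M w v) :
    ∃ w' v' : T, K w ⊆ K w' ∧ K v ⊆ K v' ∧ w' ∈ LambdaSet f φ K s' ∧
      v' ∈ LambdaSet f φ K s' ∧ ChainLe f φ K s' M w' v' := by
  obtain ⟨j, p, hj, h0, he, hm, hE⟩ := h
  have H : ∀ i : ℕ, ∃ u, K (p (min i j)) ⊆ K u ∧ u ∈ LambdaSet f φ K s' := by
    intro i
    exact BF_liftup hb hpart hnp hη₃ hR0 hR1 hB4 s' _
      ((hm (min i j) (min_le_right _ _)).1.trans hss)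
  choose q hq1 hq2 using H
  have hchain : ChainLe f φ K s' j (q 0) (q j) := by
    refine BF_chain'_to j q (fun i _ => hq2 i) ?_
    intro i hi
    obtain ⟨z, hz1, hz2⟩ := (hE i hi).2
    have hmi : min i j = i := min_eq_left (by omega)
    have hmi1 : min (i+1) j = i + 1 := min_eq_left (by omega)
    refine ⟨z, ?_, ?_⟩
    · apply hq1 i; rw [hmi]; exact hz1
    · apply hq1 (i+1); rw [hmi1]; exact hz2
  have hm0 : min 0 j = 0 := Nat.min_eq_left (Nat.zero_le j)
  have hmj : min j j = j := min_self j
  refine ⟨q 0, q j, ?_, ?_, hq2 0, hq2 j, BF_chain_mono hchain hj⟩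
  · rw [← h0]
    have := hq1 0; rw [hm0] at this; exact this
  · rw [← he]
    have := hq1 j; rw [hmj] at this; exact this


lemma BF_ncard_biUnion_le {α β : Type*} (s : Set α) (hs : s.Finite) (t : α → Set β)
    (ht : ∀ i ∈ s, (t i).Finite) (B : ℕ) (hB : ∀ i ∈ s, (t i).ncard ≤ B) :
    (⋃ i ∈ s, t i).ncard ≤ s.ncard * B := by
  classical
  set F := hs.toFinset with hFdef
  set G : α → Finset β := fun a => if h : a ∈ s then (ht a h).toFinset else ∅ with hGdef
  have hcov : (⋃ i ∈ s, t i) ⊆ ↑(F.biUnion G) := by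
    intro y hy
    simp only [Set.mem_iUnion] at hy
    obtain ⟨i, hi, hyi⟩ := hy
    simp only [Finset.coe_biUnion, Set.mem_iUnion]
    refine ⟨i, by simpa [hFdef] using hi, ?_⟩
    simp only [hGdef, dif_pos hi, Finset.mem_coe, (ht i hi).mem_toFinset]
    exact hyi
  calc (⋃ i ∈ s, t i).ncard ≤ (↑(F.biUnion G) : Set β).ncard :=
        Set.ncard_le_ncard hcov (F.biUnion G).finite_toSet
    _ = (F.biUnion G).card := Set.ncard_coe_finset _
    _ ≤ ∑ a ∈ F, (G a).card := Finset.card_biUnion_le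
    _ ≤ ∑ _a ∈ F, B := by
        refine Finset.sum_le_sum ?_
        intro a ha
        have has : a ∈ s := by simpa [hFdef] using ha
        have : (G a).card = (t a).ncard := by
          rw [hGdef]
          simp only [dif_pos has]
          exact (Set.ncard_eq_toFinset_card _ (ht a has)).symm
        rw [this]
        exact hB a has
    _ = F.card * B := by rw [Finset.sum_const, smul_eq_mul]
    _ = s.ncard * B := by rw [Set.ncard_eq_toFinset_card _ hs]

lemma BF_chain_count {s : ℝ} {B : ℕ}
    (hB3 : ∀ w ∈ LambdaSet f φ K s,
      {v : T | v ∈ LambdaSet f φ K s ∧ ChainLe f φ K s 1 w v}.Finite ∧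
      {v : T | v ∈ LambdaSet f φ K s ∧ ChainLe f φ K s 1 w v}.ncard ≤ B)
    {w0 : T} (hw0 : w0 ∈ LambdaSet f φ K s) (k : ℕ) :
    {v : T | v ∈ LambdaSet f φ K s ∧ ChainLe f φ K s k w0 v}.Finite ∧
    {v : T | v ∈ LambdaSet f φ K s ∧ ChainLe f φ K s k w0 v}.ncard ≤ B ^ k := by
  induction k with
  | zero =>
    have hsub : {v : T | v ∈ LambdaSet f φ K s ∧ ChainLe f φ K s 0 w0 v} ⊆ {w0} := by
      rintro v ⟨hv, j, p, hj, h0, he, -, -⟩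
      have hj0 : j = 0 := by omega
      rw [hj0] at he
      simp only [Set.mem_singleton_iff]
      rw [← he, h0]
    constructor
    · exact (Set.finite_singleton w0).subset hsub
    · simpa using Set.ncard_le_ncard hsub (Set.finite_singleton w0)
  | succ k ih =>
    have hsub : {v : T | v ∈ LambdaSet f φ K s ∧ ChainLe f φ K s (k+1) w0 v} ⊆
        ⋃ u ∈ {v : T | v ∈ LambdaSet f φ K s ∧ ChainLe f φ K s k w0 v},
          {v : T | v ∈ LambdaSet f φ K s ∧ ChainLe f φ K s 1 u v} := by
      rintro v ⟨hv, j, p, hj, h0, he, hm, hE⟩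
      rcases Nat.lt_or_ge j (k+1) with hjk | hjk
      · refine Set.mem_biUnion (show v ∈ _ from ⟨hv, j, p, by omega, h0, he, hm, hE⟩) ?_
        exact ⟨hv, BF_chain_refl hv⟩
      · have hjeq : j = k + 1 := by omega
        subst hjeq
        have hu : p k ∈ LambdaSet f φ K s := hm k (by omega)
        refine Set.mem_biUnion
          (show p k ∈ _ from ⟨hu, k, p, le_refl k, h0, rfl,
            fun i hi => hm i (by omega), fun i hi => hE i (by omega)⟩) ?_
        refine ⟨hv, ?_⟩
        have := hE k (by omega)
        rw [← he]
        exact BF_chain_edge hu (hm (k+1) (le_refl _)) this.2 (le_refl 1)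
    have hfin : (⋃ u ∈ {v : T | v ∈ LambdaSet f φ K s ∧ ChainLe f φ K s k w0 v},
        {v : T | v ∈ LambdaSet f φ K s ∧ ChainLe f φ K s 1 u v}).Finite :=
      ih.1.biUnion (fun u hu => (hB3 u hu.1).1)
    constructor
    · exact hfin.subset hsub
    · calc {v : T | v ∈ LambdaSet f φ K s ∧ ChainLe f φ K s (k+1) w0 v}.ncard
          ≤ _ := Set.ncard_le_ncard hsub hfin
        _ ≤ {v : T | v ∈ LambdaSet f φ K s ∧ ChainLe f φ K s k w0 v}.ncard * B :=
            BF_ncard_biUnion_le _ ih.1 _ (fun u hu => (hB3 u hu.1).1) B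
              (fun u hu => (hB3 u hu.1).2)
        _ ≤ B ^ k * B := Nat.mul_le_mul_right B ih.2
        _ = B ^ (k+1) := (pow_succ B k).symm

lemma BF_desc_cover (hpart : IsPartition f φ b K) (g : ℕ) (v : T) :
    K v = ⋃ u ∈ {u : T | f^[g] u = v}, K u := by
  induction g generalizing v with
  | zero => simp
  | succ g ih =>
    have h1 : K v = ⋃ z ∈ {z : T | f z = v}, K z := (hpart.2.2.2.1 v).symm
    rw [h1]
    ext y
    simp only [Set.mem_iUnion, Set.mem_setOf_eq, exists_prop]
    constructor
    · rintro ⟨z, hz, hy⟩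
      rw [ih z] at hy
      simp only [Set.mem_iUnion, Set.mem_setOf_eq, exists_prop] at hy
      obtain ⟨u, hu, hy⟩ := hy
      exact ⟨u, by rw [Function.iterate_succ_apply', hu, hz], hy⟩
    · rintro ⟨u, hu, hy⟩
      refine ⟨f^[g] u, by rw [← Function.iterate_succ_apply' f g u]; exact hu, ?_⟩
      rw [ih (f^[g] u)]
      simp only [Set.mem_iUnion, Set.mem_setOf_eq, exists_prop]
      exact ⟨u, rfl, hy⟩

lemma BF_desc_count {B0 : ℕ}
    (hB0 : ∀ w : T, {v : T | f v = w}.Finite ∧ {v : T | f v = w}.ncard ≤ B0)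
    (g : ℕ) (v : T) :
    {u : T | f^[g] u = v}.Finite ∧ {u : T | f^[g] u = v}.ncard ≤ B0 ^ g := by
  induction g generalizing v with
  | zero =>
    constructor
    · exact (Set.finite_singleton v).subset (fun u hu => by simpa using hu)
    · have : {u : T | f^[0] u = v} = {v} := by ext u; simp [eq_comm]
      rw [this]; simp
  | succ g ih =>
    have hdec : {u : T | f^[g+1] u = v} =
        ⋃ z ∈ {z : T | f z = v}, {u : T | f^[g] u = z} := by
      ext u
      simp only [Set.mem_iUnion, Set.mem_setOf_eq, exists_prop]
      constructor
      · intro hu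
        exact ⟨f^[g] u, by rw [← Function.iterate_succ_apply' f g u]; exact hu, rfl⟩
      · rintro ⟨z, hz, hu⟩
        rw [Function.iterate_succ_apply', hu, hz]
    rw [hdec]
    constructor
    · exact (hB0 v).1.biUnion (fun z _ => (ih z).1)
    · calc (⋃ z ∈ {z : T | f z = v}, {u : T | f^[g] u = z}).ncard
          ≤ {z : T | f z = v}.ncard * B0 ^ g :=
            BF_ncard_biUnion_le _ (hB0 v).1 _ (fun z _ => (ih z).1) _ (fun z _ => (ih z).2)
        _ ≤ B0 * B0 ^ g := Nat.mul_le_mul_right _ (hB0 v).2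
        _ = B0 ^ (g+1) := by rw [pow_succ]; ring
    
lemma BF_fin_cover {α : Type*} (x0 : α) (S : Set α) (hS : S.Finite) {N : ℕ}
    (h : S.ncard ≤ N) : ∃ c : Fin N → α, S ⊆ Set.range c := by
  classical
  set l := hS.toFinset.toList with hl
  have hlen : l.length = S.ncard := by
    rw [hl, Finset.length_toList, Set.ncard_eq_toFinset_card _ hS]
  refine ⟨fun i => l.getD i x0, ?_⟩
  intro a ha
  have hal : a ∈ l := by
    rw [hl, Finset.mem_toList]
    simpa using ha
  obtain ⟨i, hi, hia⟩ := List.mem_iff_getElem.mp hal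
  have hiN : i < N := by omega
  refine ⟨⟨i, hiN⟩, ?_⟩
  simp only
  rw [List.getD_eq_getElem l x0 hi]
  exact hia

lemma BF_far_point (hpart : IsPartition f φ b K) {a : T} {x : Y} (hx : x ∈ K a) :
    ∃ y ∈ K a, diam (K a) ≤ 2 * dist x y := by
  obtain ⟨y, hy, hmax⟩ := (hpart.1 a).exists_isMaxOn ⟨x, hx⟩
    ((continuous_const.dist continuous_id).continuousOn (s := K a))
  refine ⟨y, hy, ?_⟩
  refine diam_le_of_forall_dist_le (by positivity) ?_
  intro p hp q hq
  calc dist p q ≤ dist p x + dist x q := dist_triangle p x q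
    _ ≤ dist x y + dist x y := by
        have h1 : dist x p ≤ dist x y := hmax hp
        have h2 : dist x q ≤ dist x y := hmax hq
        rw [dist_comm p x]
        exact add_le_add h1 h2
    _ = 2 * dist x y := by ring

end Aux
/-- If a complete metric space without isolated points admits a tree with a reference
point and a partition with respect to which the metric satisfies the basic framework,
then the space is doubling and uniformly perfect. -/
theorem basic_framework_implies_doubling_uniformly_perfect
    {Y : Type*} [MetricSpace Y] [CompleteSpace Y]
    (hni : ∀ y : Y, y ∈ closure ({y}ᶜ : Set Y))
    {T : Type*} [Countable T] (f : T → T) (φ : T) (b : T → T → ℕ) (K : T → Set Y)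
    (htree : IsTreeRP f φ) (hb : IsTreeB f b)
    (hpart : IsPartition f φ b K) (hbf : BasicFramework f φ b K) :
    Doubling Y ∧ UniformlyPerfect Y := by
  classical
  obtain ⟨⟨B0, hB0⟩, hne_piece, hopen, ⟨M, hM1, η₁, hη₁, hB1⟩, ⟨η₂, hη₂, hB2⟩,
    ⟨B, hB3⟩, ⟨η₃, hη₃, R, hR0, hR1, hB4⟩⟩ := hbf
  have hnp := BF_no_periodic htree hpart
  constructor
  · -- Doubling
    obtain ⟨g, hg⟩ : ∃ g : ℕ, R ^ g < (η₃^2 * (4*η₁+1))⁻¹ :=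
      exists_pow_lt_of_lt_one (by positivity) hR1
    refine ⟨B ^ (M+1) * B0 ^ g, ?_⟩
    intro x R'
    by_cases hR' : 0 < R'
    swap
    · refine ⟨fun _ => x, ?_⟩
      have hRneg : R' ≤ 0 := not_lt.mp hR'
      have hbe : ball x (2*R') = ∅ := ball_eq_empty.mpr (by linarith)
      rw [hbe]; exact empty_subset _
    · set s' : ℝ := (4*η₁+1)*R' with hs'def
      have hs'pos : 0 < s' := mul_pos (by linarith) hR'
      obtain ⟨u0, hxu0, hdu0⟩ := BF_descend hb hpart hnp hη₃ hR0 hR1 hB4 x s' hs'pos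
      obtain ⟨w0, hw0sub, hw0Λ⟩ := BF_liftup hb hpart hnp hη₃ hR0 hR1 hB4 s' u0 hdu0
      have hxw0 : x ∈ K w0 := hw0sub hxu0
      set S := {v : T | v ∈ LambdaSet f φ K s' ∧ ChainLe f φ K s' (M+1) w0 v} with hSdef
      have hScount := BF_chain_count (hB3 s' hs'pos) hw0Λ (M+1)
      set U := ⋃ v ∈ S, {u : T | f^[g] u = v} with hUdef
      have hUfin : U.Finite := hScount.1.biUnion (fun v _ => (BF_desc_count hB0 g v).1)
      have hUcard : U.ncard ≤ B ^ (M+1) * B0 ^ g := by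
        calc U.ncard ≤ S.ncard * B0 ^ g :=
              BF_ncard_biUnion_le _ hScount.1 _ (fun v _ => (BF_desc_count hB0 g v).1) _
                (fun v _ => (BF_desc_count hB0 g v).2)
          _ ≤ B^(M+1) * B0^g := Nat.mul_le_mul_right _ hScount.2
      have hKne : ∀ u : T, (K u).Nonempty := fun u => (hpart.2.1 u).nonempty
      choose z hz using hKne
      have himg : (z '' U).Finite := hUfin.image z
      have himgcard : (z '' U).ncard ≤ B ^ (M+1) * B0 ^ g :=
        le_trans (Set.ncard_image_le hUfin) hUcard
      obtain ⟨c, hc⟩ := BF_fin_cover x (z '' U) himg himgcard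
      refine ⟨c, ?_⟩
      intro y hy
      have hyv : ∃ vb ∈ S, y ∈ K vb := by
        by_cases hxy : y = x
        · exact ⟨w0, ⟨hw0Λ, BF_chain_refl hw0Λ⟩, by rw [hxy]; exact hxw0⟩
        · have hdist : dist x y < 2 * R' := by rw [dist_comm]; exact mem_ball.mp hy
          set Sxy := {s : ℝ | 0 < s ∧ ∃ w ∈ LambdaSet f φ K s, ∃ v ∈ LambdaSet f φ K s,
            x ∈ K w ∧ y ∈ K v ∧ ChainLe f φ K s M w v} with hSxydef
          have hdelta : deltaM f φ K M x y = sInf Sxy := rfl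
          have hSxyne : Sxy.Nonempty := by
            by_contra hcon
            have h0 : deltaM f φ K M x y = 0 := by
              rw [hdelta, Set.not_nonempty_iff_eq_empty.mp hcon]
              exact Real.sInf_empty
            have h1 := (hB1 x y).2
            rw [h0, mul_zero] at h1
            have h2 : dist x y = 0 := le_antisymm h1 dist_nonneg
            exact hxy (dist_eq_zero.mp h2).symm
          have hbdd : BddBelow Sxy := ⟨0, fun t ht => ht.1.le⟩
          have hlt : sInf Sxy < s' := by
            rw [← hdelta]
            have h1 : deltaM f φ K M x y ≤ η₁ * dist x y := by
              have h2 := (hB1 x y).1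
              calc deltaM f φ K M x y = η₁ * (η₁⁻¹ * deltaM f φ K M x y) := by
                    field_simp
                _ ≤ η₁ * dist x y := mul_le_mul_of_nonneg_left h2 hη₁.le
            calc deltaM f φ K M x y ≤ η₁ * dist x y := h1
              _ < η₁ * (2*R') := mul_lt_mul_of_pos_left hdist hη₁
              _ < (4*η₁+1)*R' := by nlinarith
          obtain ⟨s, hsmem, hss'⟩ := (csInf_lt_iff hbdd hSxyne).mp hlt
          obtain ⟨hspos, w, hwΛ, v, hvΛ, hxKw, hyKv, hchain⟩ := hsmem
          obtain ⟨w', v', hw'sub, hv'sub, hw'Λ, hv'Λ, hchain'⟩ :=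
            BF_chain_lift hb hpart hnp hη₃ hR0 hR1 hB4 hss'.le hchain
          have hxw' : x ∈ K w' := hw'sub hxKw
          have hedge : ChainLe f φ K s' 1 w0 w' :=
            BF_chain_edge hw0Λ hw'Λ ⟨x, hxw0, hxw'⟩ (le_refl 1)
          have hcat : ChainLe f φ K s' (1 + M) w0 v' := BF_chain_concat hedge hchain'
          rw [Nat.add_comm 1 M] at hcat
          exact ⟨v', ⟨hv'Λ, hcat⟩, hv'sub hyKv⟩
      obtain ⟨vb, hvbS, hyvb⟩ := hyv
      have hcov := BF_desc_cover hpart g vb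
      rw [hcov] at hyvb
      simp only [Set.mem_iUnion, Set.mem_setOf_eq, exists_prop] at hyvb
      obtain ⟨u, hu, hyu⟩ := hyvb
      have huU : u ∈ U := Set.mem_biUnion hvbS hu
      have hlev : treeLevel b φ u = treeLevel b φ vb + g := by
        have h1 := BF_level_iterate (φ := φ) hb hnp u g
        rw [hu] at h1
        omega
      have hdiam_vb_le : diam (K vb) ≤ s' := hvbS.1.1
      have hRlev : R ^ treeLevel b φ vb ≤ η₃ * s' := by
        have hlow := (hB4 vb).1
        have h1 : η₃⁻¹ * R ^ treeLevel b φ vb ≤ s' := hlow.trans hdiam_vb_le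
        calc R ^ treeLevel b φ vb = η₃ * (η₃⁻¹ * R ^ treeLevel b φ vb) := by field_simp
          _ ≤ η₃ * s' := mul_le_mul_of_nonneg_left h1 hη₃.le
      have hdiam_u : diam (K u) < R' := by
        have h1 := (hB4 u).2
        rw [hlev] at h1
        have hzp : R ^ (treeLevel b φ vb + (g:ℤ)) = R ^ treeLevel b φ vb * R ^ g := by
          rw [zpow_add₀ (ne_of_gt hR0), zpow_natCast]
        rw [hzp] at h1
        have hRg0 : (0:ℝ) < R ^ g := pow_pos hR0 g
        calc diam (K u) ≤ η₃ * (R ^ treeLevel b φ vb * R ^ g) := h1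
          _ ≤ η₃ * ((η₃ * s') * R ^ g) := by
              refine mul_le_mul_of_nonneg_left ?_ hη₃.le
              exact mul_le_mul_of_nonneg_right hRlev hRg0.le
          _ = (η₃^2 * (4*η₁+1)) * R' * R^g := by rw [hs'def]; ring
          _ < R' := by
              calc (η₃^2 * (4*η₁+1)) * R' * R^g
                  < (η₃^2 * (4*η₁+1)) * R' * (η₃^2 * (4*η₁+1))⁻¹ := by
                    refine mul_lt_mul_of_pos_left hg ?_
                    positivity
                _ = R' := by field_simp
      have hmem : y ∈ ball (z u) R' := by
        rw [mem_ball]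
        calc dist y (z u) ≤ diam (K u) :=
              dist_le_diam_of_mem (hpart.1 u).isBounded hyu (hz u)
          _ < R' := hdiam_u
      obtain ⟨i, hi⟩ := hc (Set.mem_image_of_mem z huU)
      exact Set.mem_iUnion.mpr ⟨i, by rw [hi]; exact hmem⟩
  · -- Uniformly perfect
    have hRne : R ≠ 0 := hR0.ne'
    refine ⟨2*η₃^2/R + 2, ?_, ?_⟩
    · have h : 0 < 2*η₃^2/R := by positivity
      linarith
    intro x R' hR' _hne
    obtain ⟨u, hxu, hdu⟩ := BF_descend hb hpart hnp hη₃ hR0 hR1 hB4 x R' hR'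
    have hex : ∃ n : ℕ, 2*R' ≤ η₃⁻¹ * R ^ (treeLevel b φ u - (n:ℤ)) := by
      obtain ⟨n, hn⟩ : ∃ n : ℕ, 2*R' * η₃ / R ^ treeLevel b φ u < (R⁻¹)^n :=
        pow_unbounded_of_one_lt _ (one_lt_inv_iff₀.mpr ⟨hR0, hR1⟩)
      refine ⟨n, ?_⟩
      have hp : (0:ℝ) < R ^ treeLevel b φ u := zpow_pos hR0 _
      rw [div_lt_iff₀ hp, inv_pow] at hn
      have key : 2*R' < η₃⁻¹ * (R ^ treeLevel b φ u * (R ^ n)⁻¹) := by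
        calc 2*R' = (2*R' * η₃) * η₃⁻¹ := by field_simp
          _ < ((R ^ n)⁻¹ * R ^ treeLevel b φ u) * η₃⁻¹ :=
              mul_lt_mul_of_pos_right hn (inv_pos.mpr hη₃)
          _ = η₃⁻¹ * (R ^ treeLevel b φ u * (R ^ n)⁻¹) := by ring
      have hz2 : R ^ (treeLevel b φ u - (n:ℤ)) = R ^ treeLevel b φ u * (R ^ n)⁻¹ := by
        rw [zpow_sub₀ hRne, zpow_natCast, div_eq_mul_inv]
      rw [hz2]
      exact key.le
    set n₀ := Nat.find hex with hn₀def
    have hspec : 2*R' ≤ η₃⁻¹ * R ^ (treeLevel b φ u - (n₀:ℤ)) := Nat.find_spec hex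
    have hn₀1 : 1 ≤ n₀ := by
      rcases Nat.eq_zero_or_pos n₀ with h | h
      · exfalso
        rw [h] at hspec
        have h2 := (hB4 u).1
        simp only [Nat.cast_zero, sub_zero] at hspec
        linarith [h2.trans hdu]
      · exact h
    set a := f^[n₀] u with hadef
    have hxa : x ∈ K a := BF_subset_iterate hpart u n₀ hxu
    have hleva : treeLevel b φ a = treeLevel b φ u - n₀ := BF_level_iterate (φ := φ) hb hnp u n₀
    have hdiama : 2*R' ≤ diam (K a) := by
      have h1 := (hB4 a).1
      rw [hleva] at h1
      exact hspec.trans h1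
    obtain ⟨y, hya, hfar⟩ := BF_far_point hpart hxa
    have hge : R' ≤ dist x y := by linarith
    have hub : dist x y ≤ η₃ * R ^ (treeLevel b φ u - (n₀:ℤ)) := by
      calc dist x y ≤ diam (K a) := dist_le_diam_of_mem (hpart.1 a).isBounded hxa hya
        _ ≤ η₃ * R ^ treeLevel b φ a := (hB4 a).2
        _ = η₃ * R ^ (treeLevel b φ u - (n₀:ℤ)) := by rw [hleva]
    have hmin : ¬ (2*R' ≤ η₃⁻¹ * R ^ (treeLevel b φ u - ((n₀-1 : ℕ):ℤ))) :=
      Nat.find_min hex (show n₀ - 1 < n₀ by omega)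
    push_neg at hmin
    have hcast : ((n₀ - 1 : ℕ) : ℤ) = (n₀ : ℤ) - 1 := by omega
    have hkey : R ^ (treeLevel b φ u - (n₀:ℤ)) =
        R ^ (treeLevel b φ u - ((n₀-1:ℕ):ℤ)) * R⁻¹ := by
      rw [hcast, ← zpow_neg_one, ← zpow_add₀ hRne]
      congr 1
      ring
    have h5 : R ^ (treeLevel b φ u - ((n₀-1:ℕ):ℤ)) < 2*R'*η₃ := by
      calc R ^ (treeLevel b φ u - ((n₀-1:ℕ):ℤ))
          = η₃ * (η₃⁻¹ * R ^ (treeLevel b φ u - ((n₀-1:ℕ):ℤ))) := by field_simp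
        _ < η₃ * (2*R') := mul_lt_mul_of_pos_left hmin hη₃
        _ = 2*R'*η₃ := by ring
    have hlt2 : dist x y < (2*η₃^2/R + 2) * R' := by
      calc dist x y ≤ η₃ * R ^ (treeLevel b φ u - (n₀:ℤ)) := hub
        _ = η₃ * (R ^ (treeLevel b φ u - ((n₀-1:ℕ):ℤ)) * R⁻¹) := by rw [hkey]
        _ < η₃ * (2*R'*η₃ * R⁻¹) := by
            refine mul_lt_mul_of_pos_left ?_ hη₃
            exact mul_lt_mul_of_pos_right h5 (inv_pos.mpr hR0)
        _ = 2*η₃^2/R * R' := by field_simp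
        _ < (2*η₃^2/R + 2) * R' := by nlinarith
    refine ⟨y, ?_, ?_⟩
    · rw [mem_ball, dist_comm]
      exact hlt2
    · intro hcon
      exact absurd (mem_ball.mp hcon) (not_lt.mpr (by rw [dist_comm]; exact hge))
end

section
/- Under the standing assumptions (complete doubling uniformly perfect (X,d), net system with parameters (c*, C*, r), r ∈ (0,r₀], map π satisfying (T1)–(T5) with (r₀/(1−r₀))·α₁ < min(α₂, α₃ − C*)), for every (k,n) ∈ Ω one has K_{k,n} = ⋃_{ω∈π^{-1}(k,n)} K_ω. -/
open Metric Set

/-- A family of points `x (k, n)` (for `(k, n) ∈ I`, where `(k, n) ∈ I` represents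
`ω = (k,n) ∈ Ω_k`) is a *net system with parameters `(c*, C*, r)`*:
(c) points on level `k` are `c* r^k`-separated, and
(C) every point of `X` is within distance `< C* r^k` of some level-`k` point. -/
structure IsNetSystem {X : Type*} [PseudoMetricSpace X] (cstar Cstar r : ℝ)
    (I : Set (ℤ × ℕ)) (x : ℤ × ℕ → X) : Prop where
  separated : ∀ (k : ℤ) (n m : ℕ), (k, n) ∈ I → (k, m) ∈ I → n ≠ m →
    cstar * r ^ k ≤ dist (x (k, n)) (x (k, m))
  covering : ∀ (y : X) (k : ℤ), ∃ n : ℕ, (k, n) ∈ I ∧ dist y (x (k, n)) < Cstar * r ^ k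

/-- The conditions (T1)–(T5) for a map `π : Ω → Ω` relative to a net system
`(I, x)` with parameters `(c*, C*, r)` and constants `α₁, α₂, α₃`. -/
structure SatisfiesT {X : Type*} [PseudoMetricSpace X] (Cstar r α₁ α₂ α₃ : ℝ)
    (I : Set (ℤ × ℕ)) (x : ℤ × ℕ → X) (π : ℤ × ℕ → ℤ × ℕ) : Prop where
  /-- `π` maps level `k+1` into level `k` (part of (T1)). -/
  maps_into : ∀ (k : ℤ) (m : ℕ), (k + 1, m) ∈ I →
    π (k + 1, m) ∈ I ∧ (π (k + 1, m)).1 = k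
  /-- `π(Ω_{k+1}) = Ω_k` (part of (T1)). -/
  surj : ∀ (k : ℤ) (n : ℕ), (k, n) ∈ I →
    ∃ m : ℕ, (k + 1, m) ∈ I ∧ π (k + 1, m) = (k, n)
  /-- `sup_ω #π⁻¹(ω) < ∞` (part of (T1)). -/
  fiber_bound : ∃ B : ℕ, ∀ ω : ℤ × ℕ,
    {lam | lam ∈ I ∧ π lam = ω}.Finite ∧ {lam | lam ∈ I ∧ π lam = ω}.ncard ≤ B
  /-- (T2) -/
  T2 : ∀ (k : ℤ) (m : ℕ), (k + 1, m) ∈ I →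
    dist (x (k + 1, m)) (x (π (k + 1, m))) < α₁ * r ^ k
  /-- (T3) -/
  T3 : ∀ (k : ℤ) (n m : ℕ), (k, n) ∈ I → (k + 1, m) ∈ I →
    dist (x (k, n)) (x (k + 1, m)) < α₂ * r ^ k → π (k + 1, m) = (k, n)
  /-- (T4) -/
  T4 : ∀ (k : ℤ) (n₁ n₂ : ℕ), (k, n₁) ∈ I → (k, n₂) ∈ I →
    (ball (x (k, n₁)) (α₃ * r ^ k) ∩ ball (x (k, n₂)) (α₃ * r ^ k)).Nonempty →
    ∃ m₁ m₂ : ℕ, (k + 1, m₁) ∈ I ∧ (k + 1, m₂) ∈ I ∧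
      (ball (x (k + 1, m₁)) (α₃ * r ^ (k + 1)) ∩
        ball (x (k + 1, m₂)) (α₃ * r ^ (k + 1))).Nonempty ∧
      π (k + 1, m₁) = (k, n₁) ∧ π (k + 1, m₂) = (k, n₂)
  /-- (T5) -/
  T5 : ∀ (k : ℤ) (m₁ n : ℕ), (k + 1, m₁) ∈ I → (k, n) ∈ I →
    Cstar * r ^ k ≤ dist (x (k + 1, m₁)) (x (π (k + 1, m₁))) →
    dist (x (k + 1, m₁)) (x (k, n)) < α₃ * r ^ k →
    ∃ m₂ m₃ : ℕ, (k + 1, m₂) ∈ I ∧ (k + 1, m₃) ∈ I ∧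
      (ball (x (k + 1, m₂)) (α₃ * r ^ (k + 1)) ∩
        ball (x (k + 1, m₃)) (α₃ * r ^ (k + 1))).Nonempty ∧
      π (k + 1, m₂) = π (k + 1, m₁) ∧ π (k + 1, m₃) = (k, n)

/-- `K_ω`: the closure of `⋃_{l ≥ 0} {x_λ : λ ∈ π^{-l}(ω)}`. -/
def Kset {X : Type*} [PseudoMetricSpace X] (I : Set (ℤ × ℕ)) (x : ℤ × ℕ → X)
    (π : ℤ × ℕ → ℤ × ℕ) (ω : ℤ × ℕ) : Set X :=
  closure (⋃ l : ℕ, x '' {lam | lam ∈ I ∧ π^[l] lam = ω})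

/-- Lemma: `K_{k,n} = ⋃_{ω ∈ π⁻¹(k,n)} K_ω`. -/
theorem Kset_eq_union_fibers
    {X : Type*} [MetricSpace X] [CompleteSpace X]
    (hD : Doubling X) (hUP : UniformlyPerfect X)
    (cstar Cstar α₁ α₂ α₃ r₀ r : ℝ) (hc : 0 < cstar) (hcC : cstar < Cstar)
    (hα₁ : 0 < α₁) (hα₂ : 0 < α₂) (hα₃ : 0 < α₃)
    (hr₀0 : 0 < r₀) (hr₀1 : r₀ < 1)
    (hcond : r₀ / (1 - r₀) * α₁ < min α₂ (α₃ - Cstar))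
    (hr0 : 0 < r) (hrr₀ : r ≤ r₀)
    (I : Set (ℤ × ℕ)) (x : ℤ × ℕ → X) (hnet : IsNetSystem cstar Cstar r I x)
    (π : ℤ × ℕ → ℤ × ℕ) (hπ : SatisfiesT Cstar r α₁ α₂ α₃ I x π)
    :
    ∀ (k : ℤ) (n : ℕ), (k, n) ∈ I →
      Kset I x π (k, n) =
        ⋃ lam ∈ {lam : ℤ × ℕ | lam ∈ I ∧ π lam = (k, n)}, Kset I x π lam := by
  intro k n hkn
  have hr1 : r < 1 := lt_of_le_of_lt hrr₀ hr₀1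
  have hC : (0:ℝ) < Cstar := hc.trans hcC
  have h1r : (0:ℝ) < 1 - r := by linarith
  have h1r0 : (0:ℝ) < 1 - r₀ := by linarith
  -- π maps I into I, decreasing level by 1
  have hmap : ∀ μ : ℤ × ℕ, μ ∈ I → π μ ∈ I ∧ (π μ).1 = μ.1 - 1 := by
    intro μ hμ
    have hμeq : ((μ.1 - 1) + 1, μ.2) = μ := by
      ext <;> simp [sub_add_cancel]
    have h := hπ.maps_into (μ.1 - 1) μ.2 (by rw [hμeq]; exact hμ)
    rw [hμeq] at h
    exact h
  have hiter : ∀ (t : ℕ) (μ : ℤ × ℕ), μ ∈ I → π^[t] μ ∈ I := by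
    intro t
    induction t with
    | zero => intro μ hμ; simpa using hμ
    | succ t ih =>
      intro μ hμ
      rw [Function.iterate_succ_apply']
      exact (hmap _ (ih μ hμ)).1
  set F : Set (ℤ × ℕ) := {lam : ℤ × ℕ | lam ∈ I ∧ π lam = (k, n)} with hF
  have hFfin : F.Finite := by
    obtain ⟨B, hB⟩ := hπ.fiber_bound
    exact (hB (k, n)).1
  -- the pre-closure sets
  set T : ℤ × ℕ → Set X := fun lam => ⋃ l : ℕ, x '' {mu | mu ∈ I ∧ π^[l] mu = lam} with hT
  have hKT : ∀ lam, Kset I x π lam = closure (T lam) := fun _ => rfl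
  set U : Set X := ⋃ lam ∈ F, Kset I x π lam with hU
  have hUclosed : IsClosed U := hFfin.isClosed_biUnion (fun _ _ => isClosed_closure)
  -- ⊇ direction
  have hsup : U ⊆ Kset I x π (k, n) := by
    apply Set.iUnion₂_subset
    intro lam hlam
    apply closure_mono
    apply Set.iUnion_subset
    intro l
    refine Set.Subset.trans ?_ (Set.subset_iUnion _ (l + 1))
    apply Set.image_mono
    intro μ hμ
    refine ⟨hμ.1, ?_⟩
    rw [Function.iterate_succ_apply', hμ.2, hlam.2]
  -- key analytic claim : x(k,n) ∈ U
  have hxU : x (k, n) ∈ U := by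
    have hSU : (⋃ lam ∈ F, T lam) ⊆ U := by
      apply Set.iUnion₂_mono
      intro lam _
      exact subset_closure
    have hxc : x (k, n) ∈ closure (⋃ lam ∈ F, T lam) := by
      rw [Metric.mem_closure_iff]
      intro ε hε
      have hrk : (0:ℝ) < r ^ k := zpow_pos hr0 k
      have hδ : (0:ℝ) < α₂ - r₀ / (1 - r₀) * α₁ := by
        have := lt_of_lt_of_le hcond (min_le_left _ _)
        linarith
      obtain ⟨j₀, hj₀⟩ := exists_pow_lt_of_lt_one
        (lt_min (div_pos hδ hC) (div_pos hε (mul_pos hC hrk))) hr1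
      set j : ℕ := j₀ + 1 with hjdef
      have hrjj : r ^ j ≤ r ^ j₀ :=
        pow_le_pow_of_le_one (le_of_lt hr0) (le_of_lt hr1) (Nat.le_succ _)
      have hj1 : Cstar * r ^ j < α₂ - r₀ / (1 - r₀) * α₁ := by
        have := lt_of_le_of_lt hrjj (lt_of_lt_of_le hj₀ (min_le_left _ _))
        calc Cstar * r ^ j < Cstar * ((α₂ - r₀ / (1 - r₀) * α₁) / Cstar) := by
              exact (mul_lt_mul_iff_right₀ hC).2 this
          _ = α₂ - r₀ / (1 - r₀) * α₁ := by field_simp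
      have hzadd : r ^ (k + (j:ℤ)) = r ^ k * r ^ j := by
        rw [zpow_add₀ (ne_of_gt hr0), zpow_natCast]
      have hj2 : Cstar * r ^ (k + (j:ℤ)) < ε := by
        have hrj2 : r ^ j < ε / (Cstar * r ^ k) :=
          lt_of_le_of_lt hrjj (lt_of_lt_of_le hj₀ (min_le_right _ _))
        rw [hzadd]
        calc Cstar * (r ^ k * r ^ j) = (Cstar * r ^ k) * r ^ j := by ring
          _ < (Cstar * r ^ k) * (ε / (Cstar * r ^ k)) := by
              exact (mul_lt_mul_iff_right₀ (mul_pos hC hrk)).2 hrj2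
          _ = ε := by field_simp
      obtain ⟨m, hmI, hmd⟩ := hnet.covering (x (k, n)) (k + (j:ℤ))
      -- descent induction
      have hind : ∀ t : ℕ, π^[t] (k + (j:ℤ), m) ∈ I ∧
          (π^[t] (k + (j:ℤ), m)).1 = k + (j:ℤ) - t ∧
          dist (x (k, n)) (x (π^[t] (k + (j:ℤ), m))) <
            Cstar * r ^ (k + (j:ℤ)) + α₁ * r ^ (k + (j:ℤ) - t) / (1 - r) := by
        intro t
        induction t with
        | zero =>
          refine ⟨by simpa using hmI, by simp, ?_⟩
          have hpos : (0:ℝ) < α₁ * r ^ (k + (j:ℤ) - (0:ℕ)) / (1 - r) :=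
            div_pos (mul_pos hα₁ (zpow_pos hr0 _)) h1r
          simp only [Function.iterate_zero_apply]
          calc dist (x (k, n)) (x (k + (j:ℤ), m)) < Cstar * r ^ (k + (j:ℤ)) := hmd
            _ < _ := by push_cast at hpos ⊢; linarith
        | succ t ih =>
          obtain ⟨hνI, hνlev, hνd⟩ := ih
          set ν := π^[t] (k + (j:ℤ), m) with hνdef
          have hνeq : ν = ((k + (j:ℤ) - t - 1) + 1, ν.2) := by
            ext
            · rw [hνlev]; push_cast; ring
            · rfl
          have hT2 := hπ.T2 (k + (j:ℤ) - t - 1) ν.2 (by rw [← hνeq]; exact hνI)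
          rw [← hνeq] at hT2
          have hpν := hmap ν hνI
          have hlev' : (π ν).1 = k + (j:ℤ) - (t + 1 : ℕ) := by
            rw [hpν.2, hνlev]; push_cast; ring
          have hiterq : π^[t + 1] (k + (j:ℤ), m) = π ν := by
            rw [Function.iterate_succ_apply']
          refine ⟨by rw [hiterq]; exact hpν.1, by rw [hiterq]; exact hlev', ?_⟩
          rw [hiterq]
          have htri := dist_triangle (x (k, n)) (x ν) (x (π ν))
          have hsplit : r ^ (k + (j:ℤ) - t) = r ^ (k + (j:ℤ) - t - 1) * r := by
            rw [← zpow_add_one₀ (ne_of_gt hr0)]; ring_nf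
          have hp : (0:ℝ) < r ^ (k + (j:ℤ) - t - 1) := zpow_pos hr0 _
          have harith : α₁ * r ^ (k + (j:ℤ) - t) / (1 - r) + α₁ * r ^ (k + (j:ℤ) - t - 1)
              = α₁ * r ^ (k + (j:ℤ) - (t + 1 : ℕ)) / (1 - r) := by
            have he : (k + (j:ℤ) - (t + 1 : ℕ)) = k + (j:ℤ) - t - 1 := by push_cast; ring
            rw [he, hsplit]
            field_simp
            ring
          calc dist (x (k, n)) (x (π ν)) ≤ dist (x (k, n)) (x ν) + dist (x ν) (x (π ν)) := htri
            _ < (Cstar * r ^ (k + (j:ℤ)) + α₁ * r ^ (k + (j:ℤ) - t) / (1 - r))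
                + α₁ * r ^ (k + (j:ℤ) - t - 1) := by linarith
            _ = Cstar * r ^ (k + (j:ℤ)) + α₁ * r ^ (k + (j:ℤ) - (t + 1 : ℕ)) / (1 - r) := by
                rw [← harith]; ring
      obtain ⟨hLI, hLlev, hLd⟩ := hind j₀
      set lam := π^[j₀] (k + (j:ℤ), m) with hlamdef
      have hlev1 : lam.1 = k + 1 := by
        rw [hLlev, hjdef]; push_cast; ring
      have hlameq : lam = (k + 1, lam.2) := by
        ext
        · exact hlev1
        · rfl
      -- the distance bound at level k+1
      have hexp : k + (j:ℤ) - (j₀:ℤ) = k + 1 := by rw [hjdef]; push_cast; ring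
      have hbound : dist (x (k, n)) (x lam) < α₂ * r ^ k := by
        rw [hexp] at hLd
        have h1 : r ^ (k + (1:ℤ)) = r ^ k * r := by
          rw [zpow_add_one₀ (ne_of_gt hr0)]
        have h2 : r / (1 - r) ≤ r₀ / (1 - r₀) := by
          rw [div_le_div_iff₀ h1r h1r0]
          nlinarith
        have h3 : α₁ * r ^ (k + 1) / (1 - r) ≤ r₀ / (1 - r₀) * α₁ * r ^ k := by
          rw [h1]
          have : α₁ * (r ^ k * r) / (1 - r) = (r / (1 - r)) * α₁ * r ^ k := by
            field_simp
          rw [this]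
          have := mul_le_mul_of_nonneg_right
            (mul_le_mul_of_nonneg_right h2 (le_of_lt hα₁)) (le_of_lt hrk)
          linarith
        have h4 : Cstar * r ^ (k + (j:ℤ)) < (α₂ - r₀ / (1 - r₀) * α₁) * r ^ k := by
          rw [hzadd]
          have hrk1 : r ^ k * r ^ j ≤ r ^ k * r ^ j * 1 := by ring_nf; exact le_refl _
          calc Cstar * (r ^ k * r ^ j) = (Cstar * r ^ j) * r ^ k := by ring
            _ < (α₂ - r₀ / (1 - r₀) * α₁) * r ^ k :=
                (mul_lt_mul_iff_left₀ hrk).2 hj1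
        linarith
      have hT3 := hπ.T3 k n lam.2 hkn (by rw [← hlameq]; exact hLI)
        (by rw [← hlameq]; exact hbound)
      rw [← hlameq] at hT3
      refine ⟨x (k + (j:ℤ), m), ?_, ?_⟩
      · apply Set.mem_biUnion (show lam ∈ F from ⟨hLI, hT3⟩)
        exact Set.mem_iUnion.2 ⟨j₀, Set.mem_image_of_mem x ⟨hmI, rfl⟩⟩
      · exact lt_trans hmd hj2
    exact (closure_minimal hSU hUclosed) hxc
  -- ⊆ direction and conclusion
  refine le_antisymm ?_ hsup
  rw [hKT]
  apply closure_minimal ?_ hUclosed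
  apply Set.iUnion_subset
  intro l
  rintro _ ⟨μ, ⟨hμI, hμit⟩, rfl⟩
  cases l with
  | zero =>
    simp only [Function.iterate_zero_apply] at hμit
    rw [hμit]
    exact hxU
  | succ l =>
    have hlamI : π^[l] μ ∈ I := hiter l μ hμI
    have hlamF : π^[l] μ ∈ F := by
      refine ⟨hlamI, ?_⟩
      rw [← Function.iterate_succ_apply' π l μ]; exact hμit
    apply Set.mem_biUnion hlamF
    apply subset_closure
    exact Set.mem_iUnion.2 ⟨l, Set.mem_image_of_mem x ⟨hμI, rfl⟩⟩
end
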